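/- There is no Lie subalgebra h of sl₃(ℝ) satisfying simultaneously: (i) h + p_min = sl₃(ℝ), (ii) the matrix e⁰ (with 1 in position (1,3) and zeros elsewhere) belongs to h, and (iii) h ∩ p_min is contained in the set of matrices of the form [[a,0,z],[0,−a−b,0],[0,0,b]]. -/

import Mathlib

open Matrix

attribute [local instance 100] LieRing.ofAssociativeRing

/-- The submodule `sl₃(ℝ)` of traceless `3 × 3` real matrices. -/
def sl3Sub : Submodule ℝ (Matrix (Fin 3) (Fin 3) ℝ) where
  carrier := {M | M.trace = 0}
  add_mem' := by
    intro M N hM hN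
    simp only [Set.mem_setOf_eq] at *
    rw [Matrix.trace_add, hM, hN, add_zero]
  zero_mem' := by simp
  smul_mem' := by
    intro c M hM
    simp only [Set.mem_setOf_eq] at *
    rw [Matrix.trace_smul, hM, smul_zero]

/-- The submodule `p_min` of upper triangular traceless `3 × 3` real matrices. -/
def pminSub : Submodule ℝ (Matrix (Fin 3) (Fin 3) ℝ) where
  carrier := {M | M.trace = 0 ∧ ∀ i j : Fin 3, j < i → M i j = 0}
  add_mem' := by
    rintro M N ⟨hM, hM'⟩ ⟨hN, hN'⟩
    refine ⟨by rw [Matrix.trace_add, hM, hN, add_zero], fun i j hij => ?_⟩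
    simp [Matrix.add_apply, hM' i j hij, hN' i j hij]
  zero_mem' := ⟨by simp, fun i j _ => rfl⟩
  smul_mem' := by
    rintro c M ⟨hM, hM'⟩
    refine ⟨by rw [Matrix.trace_smul, hM, smul_zero], fun i j hij => ?_⟩
    simp [Matrix.smul_apply, hM' i j hij]

/-!
Write `E₂₁ = X + P` with `X ∈ h` and `P ∈ p_min`; this is possible by (i), since `E₂₁` is
traceless. Then `X` has `(2,1)`-entry `1`. Since `⁅gl₃, e⁰⁆ ⊆ p_min`, the bracket `⁅X, e⁰⁆` lies in
`h ∩ p_min` by (ii), yet its `(2,3)`-entry is `X₂₁ = 1`, contradicting (iii).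
-/

theorem Matrix.lie_single_apply {n α : Type*} [Fintype n] [DecidableEq n] [Ring α]
    (X : Matrix n n α) (i j a b : n) (c : α) :
    ⁅X, single i j c⁆ a b =
      (if b = j then X a i * c else 0) - (if a = i then c * X j b else 0) := by
  rw [Ring.lie_def, sub_apply]
  congr 1
  · split_ifs with hb
    · rw [hb, mul_single_apply_same]
    · exact mul_single_apply_of_ne _ _ _ _ _ hb _
  · split_ifs with ha
    · rw [ha, single_mul_apply_same]
    · exact single_mul_apply_of_ne _ _ _ _ _ ha _

lemma single_mem_sl3Sub {i j : Fin 3} (hij : i ≠ j) (c : ℝ) : single i j c ∈ sl3Sub :=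
  trace_single_eq_of_ne i j c hij

lemma lie_single_zero_two_mem_pminSub (X : Matrix (Fin 3) (Fin 3) ℝ) :
    ⁅X, single 0 2 (1 : ℝ)⁆ ∈ pminSub := by
  refine ⟨by rw [Ring.lie_def, trace_sub, trace_mul_comm, sub_self], fun i j hji => ?_⟩
  fin_cases i <;> fin_cases j <;> simp_all [lie_single_apply]

/-- There is no Lie subalgebra `h` of `sl₃(ℝ)` such that: (i) `h + p_min = sl₃(ℝ)`,
(ii) `e⁰ = E₁₃ ∈ h`, and (iii) `h ∩ p_min` is contained in the set of matrices of the
form `[[a,0,z],[0,−a−b,0],[0,0,b]]`. -/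
theorem stmt7 :
    ¬ ∃ h : LieSubalgebra ℝ (Matrix (Fin 3) (Fin 3) ℝ),
      h.toSubmodule ⊔ pminSub = sl3Sub ∧
      (Matrix.single 0 2 1 : Matrix (Fin 3) (Fin 3) ℝ) ∈ h ∧
      (∀ M : Matrix (Fin 3) (Fin 3) ℝ, M ∈ h → M ∈ pminSub →
        ∃ a b z : ℝ, M = !![a, 0, z; 0, -a - b, 0; 0, 0, b]) := by
  rintro ⟨h, hsup, he, hcap⟩
  have hE : single 1 0 (1 : ℝ) ∈ h.toSubmodule ⊔ pminSub :=
    hsup ▸ single_mem_sl3Sub (by decide) 1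
  obtain ⟨X, hX, P, hP, hXP⟩ := Submodule.mem_sup.mp hE
  have h₁₀ : X 1 0 = 1 := by
    have := congr_fun₂ hXP 1 0
    rwa [Matrix.add_apply, hP.2 1 0 (by decide), add_zero, single_apply_same] at this
  obtain ⟨a, b, z, hform⟩ := hcap _ (h.lie_mem hX he) (lie_single_zero_two_mem_pminSub X)
  have h₁₂ := congr_fun₂ hform 1 2
  simp [lie_single_apply, h₁₀] at h₁₂
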